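/- arXiv:1310.3741 — 3 statements merged into one kernel-verified Lean document; each statement's English description precedes it below -/
import Mathlib

section
/- For all positive integers m and all x, k: the difference of rising factorials (x+k+m)^{\overline{m}} - (x+k)^{\overline{m}} equals the double sum over v from 0 to m-1 and i from 0 to m-v-1 of x^v * k^i * C_m(v,i), where C_m(v,i) = \sum_{j=i+1}^{m-v} m^{j-i} * S(m, v+j) * binom(v+j, v) * binom(j, i), with S denoting unsigned Stirling numbers of the first kind. -/
/-- Unsigned Stirling numbers of the first kind: coefficients of the rising factorial. -/
noncomputable def stirling1 (m j : ℕ) : ℤ := (ascPochhammer ℤ m).coeff j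

/-- The coefficients `C_m(v,i)` from the expansion of the difference of rising factorials. -/
noncomputable def Ccoeff (m v i : ℕ) : ℤ :=
  ∑ j ∈ Finset.Icc (i + 1) (m - v),
    (m : ℤ) ^ (j - i) * stirling1 m (v + j) * (Nat.choose (v + j) v) * (Nat.choose j i)

/-!
Write `y = x + k`. The rising factorial is `∑ₙ S(m,n) yⁿ`, so the difference is
`∑ₙ S(m,n) ((x + (k + m))ⁿ - (x + k)ⁿ)`. Expanding both powers binomially in `x` first gives
`∑ᵥ C(n,v) xᵛ ((k + m)ʲ - kʲ)` with `j = n - v`, and `(k + m)ʲ - kʲ = ∑_{i<j} C(j,i) kⁱ mʲ⁻ⁱ`.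
Reindexing `n = v + j` and summing over `j` innermost yields exactly `C_m(v,i)`.
-/

open Finset Polynomial

theorem add_pow_sub_pow {R : Type*} [CommRing R] (a b : R) (n : ℕ) :
    (a + b) ^ n - a ^ n = ∑ i ∈ range n, a ^ i * b ^ (n - i) * n.choose i := by
  simp [add_pow, sum_range_succ]

theorem add_pow_sub_add_pow {R : Type*} [CommRing R] (x a b : R) (n : ℕ) :
    (x + b) ^ n - (x + a) ^ n =
      ∑ v ∈ range (n + 1), x ^ v * n.choose v * (b ^ (n - v) - a ^ (n - v)) := by
  rw [add_pow, add_pow, ← sum_sub_distrib]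
  exact sum_congr rfl fun v _ => by ring

theorem Polynomial.eval_add_add_sub_eval_add {R : Type*} [CommRing R] {p : R[X]} {m : ℕ}
    (hp : p.natDegree ≤ m) (x k c : R) :
    p.eval (x + k + c) - p.eval (x + k) =
      ∑ v ∈ range m, ∑ i ∈ range (m - v), x ^ v * k ^ i *
        ∑ j ∈ Icc (i + 1) (m - v),
          c ^ (j - i) * p.coeff (v + j) * (v + j).choose v * j.choose i := by
  have expand : ∀ n, p.coeff n * (x + k + c) ^ n - p.coeff n * (x + k) ^ n =
      ∑ v ∈ range (n + 1), p.coeff (v + (n - v)) * x ^ v * (v + (n - v)).choose v *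
        ∑ i ∈ range (n - v), k ^ i * c ^ (n - v - i) * (n - v).choose i := by
    intro n
    rw [← mul_sub, add_assoc, add_pow_sub_add_pow, mul_sum]
    refine sum_congr rfl fun v hv => ?_
    rw [Nat.add_sub_cancel' (Nat.lt_succ_iff.mp (mem_range.mp hv)), add_pow_sub_pow]
    ring
  rw [eval_eq_sum_range' (Nat.lt_succ_of_le hp), eval_eq_sum_range' (Nat.lt_succ_of_le hp),
    ← sum_sub_distrib]
  simp only [expand]
  -- the `v = m` row of the flipped triangle only has `j = 0`, whose inner sum is empty
  rw [sum_range_diag_flip (m + 1) fun v j => p.coeff (v + j) * x ^ v * (v + j).choose v *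
      ∑ i ∈ range j, k ^ i * c ^ (j - i) * j.choose i, sum_range_succ, Nat.add_sub_cancel_left,
    sum_range_one, sum_range_zero, mul_zero, add_zero]
  refine sum_congr rfl fun v _ => ?_
  simp only [mul_sum]
  rw [sum_comm' (t' := range (m - v)) (s' := fun i => Icc (i + 1) (m - v))]
  · exact sum_congr rfl fun i _ => sum_congr rfl fun j _ => by ring
  · intro j i
    simp only [mem_range, mem_Icc]
    omega

theorem natDegree_ascPochhammer_le (R : Type*) [CommRing R] (m : ℕ) :
    (ascPochhammer R m).natDegree ≤ m :=
  ascPochhammer_map (Int.castRingHom R) m ▸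
    natDegree_map_le.trans (ascPochhammer_natDegree ℤ m).le

theorem coeff_ascPochhammer_eq_stirling1 (R : Type*) [CommRing R] (m j : ℕ) :
    (ascPochhammer R m).coeff j = stirling1 m j := by
  rw [← ascPochhammer_map (Int.castRingHom R), coeff_map, stirling1, eq_intCast]

theorem rising_factorial_difference_expansion_general
    {R : Type*} [CommRing R] (m : ℕ) (x k : R) :
    (ascPochhammer R m).eval (x + k + (m : R)) - (ascPochhammer R m).eval (x + k) =
      ∑ v ∈ Finset.range m, ∑ i ∈ Finset.range (m - v),
        x ^ v * k ^ i * ((Ccoeff m v i : ℤ) : R) := by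
  rw [eval_add_add_sub_eval_add (natDegree_ascPochhammer_le R m)]
  refine sum_congr rfl fun v _ => sum_congr rfl fun i _ => ?_
  simp only [Ccoeff, Int.cast_sum, coeff_ascPochhammer_eq_stirling1]
  push_cast
  ring

theorem rising_factorial_difference_expansion
    {R : Type*} [CommRing R] (m : ℕ) (hm : 0 < m) (x k : R) :
    (ascPochhammer R m).eval (x + k + (m : R)) - (ascPochhammer R m).eval (x + k) =
      ∑ v ∈ Finset.range m, ∑ i ∈ Finset.range (m - v),
        x ^ v * k ^ i * ((Ccoeff m v i : ℤ) : R) :=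
  rising_factorial_difference_expansion_general m x k
end

section
/- The coefficients C_m(v,i) = \sum_{j=i+1}^{m-v} m^{j-i} * S(m,v+j) * binom(v+j,v) * binom(j,i) satisfy the recurrence (v+1) * C_m(v+1, i) = (i+1) * C_m(v, i+1) for all nonnegative integers v, i with v + i + 2 \le m. -/
theorem succ_mul_choose_mul_choose_eq (v i j : ℕ) :
    (v + 1) * (v + 1 + j).choose (v + 1) * j.choose i
      = (i + 1) * (v + 1 + j).choose v * (j + 1).choose (i + 1) := by
  have hv : (v + 1 + j).choose (v + 1) * (v + 1) = (v + 1 + j).choose v * (j + 1) := by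
    rw [Nat.choose_succ_right_eq]
    congr 2
    omega
  have hj : (j + 1) * j.choose i = (j + 1).choose (i + 1) * (i + 1) :=
    Nat.add_one_mul_choose_eq j i
  calc (v + 1) * (v + 1 + j).choose (v + 1) * j.choose i
      = (v + 1 + j).choose v * ((j + 1) * j.choose i) := by rw [mul_comm (v + 1), hv]; ring
    _ = (i + 1) * (v + 1 + j).choose v * (j + 1).choose (i + 1) := by rw [hj]; ring

-- After the shift `j ↦ j + 1` both sums carry the same factor `m ^ (j - i) * S(m, v + 1 + j)`,
-- so term by term only the binomial identity above is left.
theorem Ccoeff_recurrence_general (m v i : ℕ) :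
    ((v : ℤ) + 1) * Ccoeff m (v + 1) i = ((i : ℤ) + 1) * Ccoeff m v (i + 1) := by
  simp only [Ccoeff, Finset.mul_sum]
  refine Finset.sum_nbij' (· + 1) (· - 1) ?_ ?_ ?_ ?_ ?_
  iterate 4
    · intro j hj
      simp only [Finset.mem_Icc] at hj ⊢
      omega
  · intro j _
    have hchoose : ((v : ℤ) + 1) * (v + 1 + j).choose (v + 1) * j.choose i
        = ((i : ℤ) + 1) * (v + 1 + j).choose v * (j + 1).choose (i + 1) := by
      exact_mod_cast succ_mul_choose_mul_choose_eq v i j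
    rw [show v + (j + 1) = v + 1 + j by omega, show j + 1 - (i + 1) = j - i by omega]
    linear_combination ((m : ℤ) ^ (j - i) * stirling1 m (v + 1 + j)) * hchoose

theorem Ccoeff_recurrence (m v i : ℕ) (hm : 0 < m) (h : v + i + 2 ≤ m) :
    ((v : ℤ) + 1) * Ccoeff m (v + 1) i = ((i : ℤ) + 1) * Ccoeff m v (i + 1) :=
  Ccoeff_recurrence_general m v i
end

section
/- Correctness of the delta variant of rectangular splitting: with notation as before, define W_m(x,k) = \prod_{i=0}^{m-1} M(x, k+i) and \Delta_m(x,k) = W_m(x,k+m) - W_m(x,k) as matrices over C[x][k]. If S_0 = W_m(z, 0) and S_{i+1} = S_i + \Delta_m(z, m i) for 0 \le i \le w-2, then S_{w-1} S_{w-2} \cdots S_0 = \prod_{i=0}^{n-1} M(z,i) where n = m w. -/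
open Polynomial

/-- The ordered product `M (n-1) * ⋯ * M 1 * M 0`. -/
noncomputable def prodRev {R : Type*} [CommRing R] {r : ℕ}
    (M : ℕ → Matrix (Fin r) (Fin r) R) (n : ℕ) : Matrix (Fin r) (Fin r) R :=
  (((List.range n).reverse).map M).prod

/-- Shift the variable `k` by the natural number `a` in an element of `C[x][k]`. -/
noncomputable def shiftK {C : Type*} [CommRing C]
    (p : Polynomial (Polynomial C)) (a : ℕ) : Polynomial (Polynomial C) :=
  p.comp (Polynomial.X + (a : Polynomial (Polynomial C)))

/-- Evaluate an element of `C[x][k]` at `x = z`, `k = a•1`. -/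
noncomputable def evalZK {C : Type*} [CommRing C] {H : Type*} [CommRing H] [Algebra C H]
    (z : H) (p : Polynomial (Polynomial C)) (a : ℕ) : H :=
  Polynomial.eval₂ ((Polynomial.aeval z : Polynomial C →ₐ[C] H) : Polynomial C →+* H)
    ((a : H)) p

/-!
Shifting `k` by `m` and then evaluating at `k = m i` is evaluating at `k = m (i + 1)`, so the
recurrence for `S` telescopes: `S i = W_m(z, m i) = M(z, m i + m - 1) ⋯ M(z, m i)`. The product
`S_{w-1} ⋯ S_0` is then the full product `M(z, m w - 1) ⋯ M(z, 0)` cut into `w` consecutive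
blocks of length `m`.
-/

section prodRev

variable {R : Type*} [CommRing R] {r : ℕ}

lemma prodRev_congr {M N : ℕ → Matrix (Fin r) (Fin r) R} {n : ℕ} (h : ∀ i < n, M i = N i) :
    prodRev M n = prodRev N n := by
  unfold prodRev
  congr 1
  exact List.map_congr_left fun i hi => h i (List.mem_range.mp (List.mem_reverse.mp hi))

lemma prodRev_succ (M : ℕ → Matrix (Fin r) (Fin r) R) (n : ℕ) :
    prodRev M (n + 1) = M n * prodRev M n := by
  simp [prodRev, List.range_succ]

lemma prodRev_add (M : ℕ → Matrix (Fin r) (Fin r) R) (a b : ℕ) :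
    prodRev M (a + b) = prodRev (fun i => M (a + i)) b * prodRev M a := by
  simp [prodRev, List.range_add, Function.comp_def]

lemma prodRev_mul (M : ℕ → Matrix (Fin r) (Fin r) R) (m w : ℕ) :
    prodRev M (m * w) = prodRev (fun i => prodRev (fun j => M (m * i + j)) m) w := by
  induction w with
  | zero => simp [prodRev]
  | succ w ih => rw [prodRev_succ, Nat.mul_succ, prodRev_add, ih]

lemma RingHom.map_prodRev {S : Type*} [CommRing S] (f : R →+* S)
    (M : ℕ → Matrix (Fin r) (Fin r) R) (n : ℕ) :
    (prodRev M n).map f = prodRev (fun i => (M i).map f) n := by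
  change f.mapMatrix _ = _
  rw [prodRev, map_list_prod, List.map_map]
  rfl

end prodRev

lemma eq_of_eq_add_sub {G : Type*} [AddCommGroup G] {S F : ℕ → G} {w : ℕ} (h0 : S 0 = F 0)
    (hsucc : ∀ i, i ≤ w - 2 → S (i + 1) = S i + (F (i + 1) - F i)) : ∀ i < w, S i = F i := by
  intro i hi
  induction i with
  | zero => exact h0
  | succ i ih => rw [hsucc i (by omega), ih (by omega), add_sub_cancel]

section evalZK

variable {C : Type*} [CommRing C] {H : Type*} [CommRing H] [Algebra C H] {r : ℕ}

noncomputable def evalZKRingHom (z : H) (a : ℕ) : Polynomial (Polynomial C) →+* H :=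
  eval₂RingHom (aeval z : Polynomial C →ₐ[C] H).toRingHom (a : H)

lemma evalZK_shiftK (z : H) (p : Polynomial (Polynomial C)) (a b : ℕ) :
    evalZK z (shiftK p b) a = evalZK z p (a + b) := by
  simp [evalZK, shiftK, eval₂_comp]

lemma map_evalZK_map_shiftK (z : H) (N : Matrix (Fin r) (Fin r) (Polynomial (Polynomial C)))
    (a b : ℕ) :
    ((N.map fun p => shiftK p b).map fun p => evalZK z p a) =
      N.map fun p => evalZK z p (a + b) := by
  ext
  simp [evalZK_shiftK]

lemma map_evalZK_sub (z : H) (N N' : Matrix (Fin r) (Fin r) (Polynomial (Polynomial C)))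
    (a : ℕ) :
    ((N - N').map fun p => evalZK z p a) =
      (N.map fun p => evalZK z p a) - N'.map fun p => evalZK z p a :=
  Matrix.map_sub _ (fun p q => map_sub (evalZKRingHom z a) p q) N N'

lemma map_evalZK_prodRev_shiftK (z : H) (M : Matrix (Fin r) (Fin r) (Polynomial (Polynomial C)))
    (m a : ℕ) :
    ((prodRev (fun i => M.map fun p => shiftK p i) m).map fun p => evalZK z p a) =
      prodRev (fun j => M.map fun p => evalZK z p (a + j)) m := by
  change (prodRev _ m).map (evalZKRingHom z a) = _
  rw [RingHom.map_prodRev]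
  exact prodRev_congr fun j _ => map_evalZK_map_shiftK z M a j

end evalZK

theorem rectangular_splitting_delta_correct_general {C : Type*} [CommRing C]
    {H : Type*} [CommRing H] [Algebra C H] {r : ℕ}
    (M : Matrix (Fin r) (Fin r) (Polynomial (Polynomial C))) (z : H)
    (n m w : ℕ) (hn : n = m * w)
    (W Δ : Matrix (Fin r) (Fin r) (Polynomial (Polynomial C)))
    (hW : W = prodRev (fun i => M.map fun p => shiftK p i) m)
    (hΔ : Δ = (W.map fun p => shiftK p m) - W)
    (S : ℕ → Matrix (Fin r) (Fin r) H)
    (hS0 : S 0 = W.map fun p => evalZK z p 0)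
    (hSsucc : ∀ i, i ≤ w - 2 → S (i + 1) = S i + (Δ.map fun p => evalZK z p (m * i))) :
    prodRev S w = prodRev (fun i => M.map fun p => evalZK z p i) n := by
  have hS : ∀ i < w, S i = W.map fun p => evalZK z p (m * i) := by
    refine eq_of_eq_add_sub (by simpa using hS0) fun i hi => ?_
    rw [hSsucc i hi, hΔ, map_evalZK_sub, map_evalZK_map_shiftK, Nat.mul_succ]
  rw [prodRev_congr hS, hn, prodRev_mul]
  refine prodRev_congr fun i _ => ?_
  rw [hW, map_evalZK_prodRev_shiftK]

theorem rectangular_splitting_delta_correct {C : Type*} [CommRing C]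
    {H : Type*} [CommRing H] [Algebra C H] {r : ℕ}
    (M : Matrix (Fin r) (Fin r) (Polynomial (Polynomial C))) (z : H)
    (n m w : ℕ) (hm : 0 < m) (hw : 0 < w) (hn : n = m * w)
    (W Δ : Matrix (Fin r) (Fin r) (Polynomial (Polynomial C)))
    (hW : W = prodRev (fun i => M.map fun p => shiftK p i) m)
    (hΔ : Δ = (W.map fun p => shiftK p m) - W)
    (S : ℕ → Matrix (Fin r) (Fin r) H)
    (hS0 : S 0 = W.map fun p => evalZK z p 0)
    (hSsucc : ∀ i, i ≤ w - 2 → S (i + 1) = S i + (Δ.map fun p => evalZK z p (m * i))) :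
    prodRev S w = prodRev (fun i => M.map fun p => evalZK z p i) n :=
  rectangular_splitting_delta_correct_general M z n m w hn W Δ hW hΔ S hS0 hSsucc
end
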